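/- arXiv:0807.1271 — 5 statements merged into one kernel-verified Lean document; each statement's English description precedes it below -/
import Mathlib

section
/- Let K ∈ ℕ, let λ₀, …, λ_K be nonnegative reals with W := Σ_{m=0}^K λ_m > 0, let x₀, …, x_K and c be real numbers, and let η ∈ (0, 1). If Re( e^{−ic} · (1/W) Σ_{m=0}^K λ_m e^{i x_m} ) ≥ 1 − η, then Σ_{m=0}^K λ_m · d(x_m − c)² ≤ (π²/2) · W · η. -/
/-
Reduce `x m - c` modulo `2π` to a representative `r` with `|r| ≤ π`. There `cos r ≤ 1 - (2/π²) r²`,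
so `d(y)² ≤ (π²/2)(1 - cos y)` for every real `y`. Weighting by `λ_m` and summing, the right-hand
side becomes `(π²/2)(W - Σ λ_m cos(x_m - c))`, and `Σ λ_m cos(x_m - c)` is `W` times the real part
in the hypothesis, hence at least `W(1 - η)`.
-/

/-- The distance from a real number to the set `2πℤ`. -/
noncomputable def distToTwoPiZ (y : ℝ) : ℝ := ⨅ j : ℤ, |y - 2 * Real.pi * j|

open Real Finset

lemma distToTwoPiZ_nonneg (y : ℝ) : 0 ≤ distToTwoPiZ y :=
  le_ciInf fun _ => abs_nonneg _

lemma distToTwoPiZ_le (y : ℝ) (j : ℤ) : distToTwoPiZ y ≤ |y - 2 * π * j| :=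
  ciInf_le ⟨0, by rintro _ ⟨k, rfl⟩; positivity⟩ j

lemma exists_int_abs_sub_two_pi_mul_le_pi (y : ℝ) : ∃ j : ℤ, |y - 2 * π * j| ≤ π := by
  refine ⟨round (y / (2 * π)), ?_⟩
  have hround := abs_sub_round (y / (2 * π))
  have hy : y - 2 * π * round (y / (2 * π)) = 2 * π * (y / (2 * π) - round (y / (2 * π))) := by
    field_simp
  rw [hy, abs_mul, abs_of_pos (by positivity)]
  nlinarith [pi_pos]

lemma distToTwoPiZ_sq_le (y : ℝ) : distToTwoPiZ y ^ 2 ≤ π ^ 2 / 2 * (1 - cos y) := by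
  obtain ⟨j, hj⟩ := exists_int_abs_sub_two_pi_mul_le_pi y
  set r := y - 2 * π * j with hr
  have hcos : cos r = cos y := by
    rw [hr, show 2 * π * j = j * (2 * π) by ring, cos_sub_int_mul_two_pi]
  calc distToTwoPiZ y ^ 2 ≤ |r| ^ 2 := by gcongr; exacts [distToTwoPiZ_nonneg y, distToTwoPiZ_le y j]
    _ = π ^ 2 / 2 * (2 / π ^ 2 * r ^ 2) := by rw [sq_abs]; field_simp
    _ ≤ π ^ 2 / 2 * (1 - cos r) := by gcongr; linarith [cos_le_one_sub_mul_cos_sq hj]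
    _ = π ^ 2 / 2 * (1 - cos y) := by rw [hcos]

lemma sum_mul_distToTwoPiZ_sq_le {ι : Type*} (s : Finset ι) (lam y : ι → ℝ)
    (hlam : ∀ i ∈ s, 0 ≤ lam i) :
    ∑ i ∈ s, lam i * distToTwoPiZ (y i) ^ 2
      ≤ π ^ 2 / 2 * (∑ i ∈ s, lam i - ∑ i ∈ s, lam i * cos (y i)) := by
  rw [← sum_sub_distrib, mul_sum]
  refine sum_le_sum fun i hi => ?_
  calc lam i * distToTwoPiZ (y i) ^ 2 ≤ lam i * (π ^ 2 / 2 * (1 - cos (y i))) :=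
        mul_le_mul_of_nonneg_left (distToTwoPiZ_sq_le (y i)) (hlam i hi)
    _ = π ^ 2 / 2 * (lam i - lam i * cos (y i)) := by ring

lemma re_exp_neg_mul_sum_mul_exp {ι : Type*} (s : Finset ι) (lam x : ι → ℝ) (c : ℝ) :
    (Complex.exp (-Complex.I * c) * ∑ i ∈ s, (lam i : ℂ) * Complex.exp (Complex.I * x i)).re
      = ∑ i ∈ s, lam i * cos (x i - c) := by
  rw [mul_sum, Complex.re_sum]
  refine sum_congr rfl fun i _ => ?_
  rw [mul_left_comm, ← Complex.exp_add,
    show -Complex.I * c + Complex.I * x i = ((x i - c : ℝ) : ℂ) * Complex.I by push_cast; ring,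
    Complex.re_ofReal_mul, Complex.exp_ofReal_mul_I_re]

theorem weighted_squared_alignment_error_bound_general
    (K : ℕ) (lam : Fin (K + 1) → ℝ) (hlam : ∀ m, 0 ≤ lam m)
    (W : ℝ) (hW : W = ∑ m, lam m) (hWpos : 0 < W)
    (x : Fin (K + 1) → ℝ) (c : ℝ) (η : ℝ)
    (h : 1 - η ≤
      (Complex.exp (-Complex.I * (c : ℂ)) *
        ((1 / W : ℝ) * ∑ m, (lam m : ℂ) * Complex.exp (Complex.I * (x m : ℂ)))).re) :
    ∑ m, lam m * distToTwoPiZ (x m - c) ^ 2 ≤ (Real.pi ^ 2 / 2) * W * η := by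
  rw [mul_left_comm, Complex.re_ofReal_mul, re_exp_neg_mul_sum_mul_exp,
    one_div, inv_mul_eq_div, le_div_iff₀ hWpos] at h
  calc ∑ m, lam m * distToTwoPiZ (x m - c) ^ 2
      ≤ π ^ 2 / 2 * (W - ∑ m, lam m * cos (x m - c)) :=
        hW ▸ sum_mul_distToTwoPiZ_sq_le _ lam (fun m => x m - c) fun m _ => hlam m
    _ ≤ π ^ 2 / 2 * W * η := by
        rw [mul_assoc]
        gcongr
        linarith

theorem weighted_squared_alignment_error_bound
    (K : ℕ) (lam : Fin (K + 1) → ℝ) (hlam : ∀ m, 0 ≤ lam m)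
    (W : ℝ) (hW : W = ∑ m, lam m) (hWpos : 0 < W)
    (x : Fin (K + 1) → ℝ) (c : ℝ) (η : ℝ) (hη : η ∈ Set.Ioo (0 : ℝ) 1)
    (h : 1 - η ≤
      (Complex.exp (-Complex.I * (c : ℂ)) *
        ((1 / W : ℝ) * ∑ m, (lam m : ℂ) * Complex.exp (Complex.I * (x m : ℂ)))).re) :
    ∑ m, lam m * distToTwoPiZ (x m - c) ^ 2 ≤ (Real.pi ^ 2 / 2) * W * η :=
  weighted_squared_alignment_error_bound_general K lam hlam W hW hWpos x c η h
end

section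
/- Let K ∈ ℕ, let λ₀, …, λ_K be nonnegative reals with W := Σ_{m=0}^K λ_m > 0, and let x₀, …, x_K be real numbers whose weighted mean vanishes: Σ_{m=0}^K λ_m x_m = 0. Then | | (1/W) Σ_{m=0}^K λ_m e^{i x_m} |² − 1 | ≤ (1/W) Σ_{m=0}^K λ_m x_m². -/
/-!
Write `S = ∑ λ_m e^{i x_m}` and `r = ‖S‖ / W`. The triangle inequality gives `r ≤ 1`, and
`cos x ≥ 1 - x² / 2` gives `r ≥ Re S / W ≥ 1 - T / (2W)` with `T = ∑ λ_m x_m²`. Hence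
`|r² - 1| = (1 - r)(1 + r) ≤ 2 (1 - r) ≤ T / W`.
-/

open Finset Complex

theorem abs_sq_sub_one_le_two_mul_one_sub {r : ℝ} (hr : |r| ≤ 1) :
    |r ^ 2 - 1| ≤ 2 * (1 - r) := by
  obtain ⟨hr₀, hr₁⟩ := abs_le.mp hr
  rw [abs_of_nonpos (by nlinarith)]
  nlinarith [sq_nonneg (1 - r)]

theorem abs_norm_sq_sub_one_le_two_mul_one_sub_re {z : ℂ} (hz : ‖z‖ ≤ 1) :
    |‖z‖ ^ 2 - 1| ≤ 2 * (1 - z.re) := by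
  calc |‖z‖ ^ 2 - 1| ≤ 2 * (1 - ‖z‖) :=
        abs_sq_sub_one_le_two_mul_one_sub (by rwa [abs_norm])
    _ ≤ 2 * (1 - z.re) := by linarith [re_le_norm z]

section WeightedExp

variable {ι : Type*} (s : Finset ι) {w : ι → ℝ} (x : ι → ℝ)

theorem norm_sum_mul_exp_mul_I_le (hw : ∀ i ∈ s, 0 ≤ w i) :
    ‖∑ i ∈ s, (w i : ℂ) * exp (I * x i)‖ ≤ ∑ i ∈ s, w i := by
  refine (norm_sum_le _ _).trans (sum_le_sum fun i hi => ?_)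
  rw [norm_mul, mul_comm I, norm_exp_ofReal_mul_I, mul_one, norm_real,
    Real.norm_of_nonneg (hw i hi)]

theorem sum_sub_half_sum_mul_sq_le_re_sum_mul_exp_mul_I (hw : ∀ i ∈ s, 0 ≤ w i) :
    ∑ i ∈ s, w i - (∑ i ∈ s, w i * x i ^ 2) / 2 ≤ (∑ i ∈ s, (w i : ℂ) * exp (I * x i)).re := by
  rw [re_sum, sum_div, ← sum_sub_distrib]
  refine sum_le_sum fun i hi => ?_
  rw [re_ofReal_mul, mul_comm I, exp_ofReal_mul_I_re]
  nlinarith [Real.one_sub_sq_div_two_le_cos (x := x i), hw i hi]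

end WeightedExp

theorem second_order_taylor_bound_centered_general
    (K : ℕ) (lam : Fin (K + 1) → ℝ) (hlam : ∀ m, 0 ≤ lam m)
    (W : ℝ) (hW : W = ∑ m, lam m) (hWpos : 0 < W)
    (x : Fin (K + 1) → ℝ) :
    |‖((1 / W : ℝ) * ∑ m, (lam m : ℂ) * Complex.exp (Complex.I * (x m : ℂ)) : ℂ)‖ ^ 2 - 1| ≤
      (1 / W) * ∑ m, lam m * x m ^ 2 := by
  set S := ∑ m, (lam m : ℂ) * exp (I * x m)
  have hS_norm : ‖S‖ ≤ W := hW ▸ norm_sum_mul_exp_mul_I_le univ x fun m _ => hlam m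
  have hS_re : W - (∑ m, lam m * x m ^ 2) / 2 ≤ S.re :=
    hW ▸ sum_sub_half_sum_mul_sq_le_re_sum_mul_exp_mul_I univ x fun m _ => hlam m
  have hz_norm : ‖((1 / W : ℝ) : ℂ) * S‖ ≤ 1 := by
    rw [norm_mul, norm_real, Real.norm_of_nonneg (by positivity), one_div, inv_mul_le_one₀ hWpos]
    exact hS_norm
  calc _ ≤ 2 * (1 - (((1 / W : ℝ) : ℂ) * S).re) :=
        abs_norm_sq_sub_one_le_two_mul_one_sub_re hz_norm
    _ = 2 * (W - S.re) / W := by rw [re_ofReal_mul]; field_simp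
    _ ≤ _ := by rw [div_le_iff₀ hWpos]; field_simp; linarith

theorem second_order_taylor_bound_centered
    (K : ℕ) (lam : Fin (K + 1) → ℝ) (hlam : ∀ m, 0 ≤ lam m)
    (W : ℝ) (hW : W = ∑ m, lam m) (hWpos : 0 < W)
    (x : Fin (K + 1) → ℝ) (hmean : ∑ m, lam m * x m = 0) :
    |‖((1 / W : ℝ) * ∑ m, (lam m : ℂ) * Complex.exp (Complex.I * (x m : ℂ)) : ℂ)‖ ^ 2 - 1| ≤
      (1 / W) * ∑ m, lam m * x m ^ 2 :=
  second_order_taylor_bound_centered_general K lam hlam W hW hWpos x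
end

section
/- Let (Ω, 𝓕, ℙ) be a probability space, let (θ_m)_{m ≥ 0} be independent and identically distributed real-valued random variables taking values in [0, 2π], and let g : ℝ → ℝ be Lipschitz. Let (θ̂_m)_{m ≥ 0} be real-valued random variables taking values in [0, 2π] such that (1/(M+1)) Σ_{m=0}^M |θ̂_m − θ_m| → 0 almost surely as M → ∞. Then (1/(M+1)) Σ_{m=0}^M g(θ̂_m) → 𝔼[g(θ₀)] almost surely as M → ∞. -/
/-!
The averages of `g (θ m)` converge almost surely to `𝔼[g (θ 0)]` by the strong law of large
numbers, `g` being bounded on `[0, 2π]`. Replacing `θ m` by `θh m` moves the average by at most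
`L` times the average of `|θh m - θ m|`, which tends to zero.
-/

open MeasureTheory ProbabilityTheory Filter Finset Topology

noncomputable def runningAverage (u : ℕ → ℝ) (M : ℕ) : ℝ :=
  1 / (M + 1 : ℝ) * ∑ m ∈ range (M + 1), u m

lemma abs_runningAverage_sub_le (u v : ℕ → ℝ) (M : ℕ) :
    |runningAverage u M - runningAverage v M| ≤ runningAverage (fun m => |u m - v m|) M := by
  have hpos : (0 : ℝ) ≤ 1 / (M + 1 : ℝ) := by positivity
  calc |runningAverage u M - runningAverage v M|
      = 1 / (M + 1 : ℝ) * |∑ m ∈ range (M + 1), (u m - v m)| := by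
        rw [runningAverage, runningAverage, ← mul_sub, ← sum_sub_distrib, abs_mul,
          abs_of_nonneg hpos]
    _ ≤ runningAverage (fun m => |u m - v m|) M :=
        mul_le_mul_of_nonneg_left (abs_sum_le_sum_abs _ _) hpos

lemma runningAverage_const_mul (c : ℝ) (u : ℕ → ℝ) (M : ℕ) :
    runningAverage (fun m => c * u m) M = c * runningAverage u M := by
  simp only [runningAverage, ← mul_sum]
  ring

lemma runningAverage_mono {u v : ℕ → ℝ} (huv : ∀ m, u m ≤ v m) (M : ℕ) :
    runningAverage u M ≤ runningAverage v M :=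
  mul_le_mul_of_nonneg_left (sum_le_sum fun m _ => huv m) (by positivity)

lemma LipschitzWith.tendsto_runningAverage_comp {α : Type*} [PseudoMetricSpace α] {g : α → ℝ}
    {L : NNReal} (hg : LipschitzWith L g) {x y : ℕ → α} {c : ℝ}
    (hy : Tendsto (runningAverage (g ∘ y)) atTop (𝓝 c))
    (hxy : Tendsto (runningAverage fun m => dist (x m) (y m)) atTop (𝓝 0)) :
    Tendsto (runningAverage (g ∘ x)) atTop (𝓝 c) := by
  have hdiff : Tendsto (fun M => runningAverage (g ∘ x) M - runningAverage (g ∘ y) M)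
      atTop (𝓝 0) := by
    refine squeeze_zero_norm (fun M => ?_) (by simpa using hxy.const_mul (L : ℝ))
    calc ‖runningAverage (g ∘ x) M - runningAverage (g ∘ y) M‖
        ≤ runningAverage (fun m => |g (x m) - g (y m)|) M := abs_runningAverage_sub_le _ _ M
      _ ≤ runningAverage (fun m => L * dist (x m) (y m)) M :=
          runningAverage_mono (fun m => hg.dist_le_mul (x m) (y m)) M
      _ = L * runningAverage (fun m => dist (x m) (y m)) M := runningAverage_const_mul _ _ M
  simpa using hy.add hdiff

lemma Continuous.integrable_comp_of_mapsTo_isCompact {Ω α : Type*} [MeasurableSpace Ω]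
    {μ : Measure Ω} [IsFiniteMeasure μ] [TopologicalSpace α] [MeasurableSpace α]
    [OpensMeasurableSpace α] {g : α → ℝ} (hg : Continuous g) {X : Ω → α} (hX : AEMeasurable X μ)
    {K : Set α} (hK : IsCompact K) (hXK : ∀ ω, X ω ∈ K) :
    Integrable (fun ω => g (X ω)) μ := by
  obtain ⟨C, hC⟩ := hK.exists_bound_of_continuousOn hg.continuousOn
  exact .of_bound (hg.measurable.comp_aemeasurable hX).aestronglyMeasurable C
    (ae_of_all _ fun ω => hC _ (hXK ω))

lemma strong_law_ae_runningAverage {Ω : Type*} [MeasurableSpace Ω] {μ : Measure Ω}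
    (X : ℕ → Ω → ℝ) (hint : Integrable (X 0) μ) (hindep : Pairwise (Function.onFun (IndepFun · · μ) X))
    (hident : ∀ i, IdentDistrib (X i) (X 0) μ μ) :
    ∀ᵐ ω ∂μ, Tendsto (runningAverage (X · ω)) atTop (𝓝 (∫ ω', X 0 ω' ∂μ)) := by
  filter_upwards [strong_law_ae_real X hint hindep hident] with ω hω
  refine (hω.comp (tendsto_add_atTop_nat 1)).congr fun M => ?_
  simp [runningAverage, div_eq_inv_mul]

theorem plugin_average_tendsto_expectation_general
    {Ω : Type*} [MeasureSpace Ω] [IsProbabilityMeasure (ℙ : Measure Ω)]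
    (θ θh : ℕ → Ω → ℝ)
    (hindep : iIndepFun θ ℙ)
    (hident : ∀ m, IdentDistrib (θ m) (θ 0) ℙ ℙ)
    (hrange : ∀ m ω, θ m ω ∈ Set.Icc 0 (2 * Real.pi))
    (g : ℝ → ℝ) (L : NNReal) (hg : LipschitzWith L g)
    (hconv : ∀ᵐ ω ∂ℙ, Tendsto
      (fun M : ℕ => (1 / (M + 1 : ℝ)) * ∑ m ∈ Finset.range (M + 1), |θh m ω - θ m ω|)
      atTop (nhds 0)) :
    ∀ᵐ ω ∂ℙ, Tendsto
      (fun M : ℕ => (1 / (M + 1 : ℝ)) * ∑ m ∈ Finset.range (M + 1), g (θh m ω))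
      atTop (nhds (∫ ω', g (θ 0 ω') ∂ℙ)) := by
  have hgm : Measurable g := hg.continuous.measurable
  have hint : Integrable (fun ω => g (θ 0 ω)) ℙ :=
    hg.continuous.integrable_comp_of_mapsTo_isCompact (hident 0).aemeasurable_fst
      isCompact_Icc (hrange 0)
  have hslln := strong_law_ae_runningAverage (fun m ω => g (θ m ω)) hint
    (fun i j hij => (hindep.indepFun hij).comp hgm hgm) (fun i => (hident i).comp hgm)
  filter_upwards [hslln, hconv] with ω hω hclose
  exact hg.tendsto_runningAverage_comp (x := (θh · ω)) hω hclose

theorem plugin_average_tendsto_expectation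
    {Ω : Type*} [MeasureSpace Ω] [IsProbabilityMeasure (ℙ : Measure Ω)]
    (θ θh : ℕ → Ω → ℝ)
    (hmeas : ∀ m, Measurable (θ m))
    (hindep : iIndepFun θ ℙ)
    (hident : ∀ m, IdentDistrib (θ m) (θ 0) ℙ ℙ)
    (hrange : ∀ m ω, θ m ω ∈ Set.Icc 0 (2 * Real.pi))
    (hrangeh : ∀ m ω, θh m ω ∈ Set.Icc 0 (2 * Real.pi))
    (g : ℝ → ℝ) (L : NNReal) (hg : LipschitzWith L g)
    (hconv : ∀ᵐ ω ∂ℙ, Tendsto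
      (fun M : ℕ => (1 / (M + 1 : ℝ)) * ∑ m ∈ Finset.range (M + 1), |θh m ω - θ m ω|)
      atTop (nhds 0)) :
    ∀ᵐ ω ∂ℙ, Tendsto
      (fun M : ℕ => (1 / (M + 1 : ℝ)) * ∑ m ∈ Finset.range (M + 1), g (θh m ω))
      atTop (nhds (∫ ω', g (θ 0 ω') ∂ℙ)) :=
  plugin_average_tendsto_expectation_general θ θh hindep hident hrange g L hg hconv
end

section
/- Let n ≥ 1 be an integer, let s : ℝ → ℂ be 2π-periodic and Lipschitz with constant L, let k ∈ ℤ, set t_m = 2π(m−1)/n for m = 1, …, n, and let c_s(k) = (1/n) Σ_{m=1}^n s(t_m) e^{−2πimk/n}. Let θ ∈ ℝ be such that |θ − 2πj/n| ≤ π/n for some j ∈ ℤ. Then | (1/n) Σ_{m=1}^n s(t_m − θ) e^{−2πimk/n} − e^{−ikθ} c_s(k) | ≤ (L + |k|·|c_s(k)|) · π/n. -/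
/-!
Write `θ = 2πj/n + ε` with `|ε| ≤ π/n`. Shifting the samples by the grid point `2πj/n` permutes
them cyclically, so by periodicity the shifted DFT there is exactly `e^{-ik·2πj/n} c_s(k)`.
Moving from the grid point to `θ` changes every sample by at most `L|ε|` and the phase factor by
at most `|k||ε|`, which gives the two terms of the bound.
-/

open Complex Finset Function
open scoped Real

theorem Function.Periodic.sum_range_add {M : Type*} [AddCommMonoid M] {f : ℤ → M} {n : ℕ}
    (hf : Periodic f n) (a : ℤ) : ∑ m ∈ range n, f (a + m) = ∑ m ∈ range n, f m := by
  have step (b : ℤ) : ∑ m ∈ range n, f (b + 1 + m) = ∑ m ∈ range n, f (b + m) := by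
    cases n with
    | zero => simp
    | succ n =>
      rw [sum_range_succ, sum_range_succ', Nat.cast_zero, add_zero, ← hf b]
      push_cast
      simp only [add_comm (1 : ℤ), add_assoc]
  induction a using Int.induction_on with
  | zero => simp
  | succ i ih => rw [step, ih]
  | pred i ih => rw [← ih, ← step, sub_add_cancel]

theorem Finset.sum_Icc_one_eq_sum_range {M : Type*} [AddCommMonoid M] (f : ℕ → M) (n : ℕ) :
    ∑ m ∈ Icc 1 n, f m = ∑ m ∈ range n, f (1 + m) := by
  rw [← Finset.Ico_add_one_right_eq_Icc, sum_Ico_eq_sum_range, Nat.add_sub_cancel]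

theorem Function.Periodic.sum_Icc_sub {M : Type*} [AddCommMonoid M] {f : ℤ → M} {n : ℕ}
    (hf : Periodic f n) (j : ℤ) : ∑ m ∈ Icc 1 n, f (m - j) = ∑ m ∈ Icc 1 n, f m := by
  simp only [sum_Icc_one_eq_sum_range, Nat.cast_add, Nat.cast_one, sub_eq_neg_add (_ + _ : ℤ),
    ← add_assoc]
  rw [hf.sum_range_add, hf.sum_range_add]

noncomputable def shiftedDFT (n : ℕ) (s : ℝ → ℂ) (k : ℤ) (θ : ℝ) : ℂ :=
  (1 / n : ℂ) * ∑ m ∈ Icc 1 n,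
    s (2 * π * ((m : ℝ) - 1) / n - θ) * exp (-2 * π * I * (m : ℂ) * (k : ℂ) / (n : ℂ))

theorem shiftedDFT_grid {n : ℕ} (hn : n ≠ 0) {s : ℝ → ℂ} (hper : Periodic s (2 * π)) (k j : ℤ) :
    shiftedDFT n s k (2 * π * j / n) =
      exp (-I * k * (2 * π * j / n : ℝ)) * shiftedDFT n s k 0 := by
  set F : ℤ → ℂ := fun m => s (2 * π * ((m : ℝ) - 1) / n) * exp (-2 * π * I * m * k / n)
  have hF : Periodic F n := by
    intro m
    have harg : 2 * π * (((m + n : ℤ) : ℝ) - 1) / n = 2 * π * ((m : ℝ) - 1) / n + 2 * π := by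
      push_cast; field_simp; ring
    have hphase : -2 * π * I * ((m + n : ℤ) : ℂ) * k / n =
        -2 * π * I * m * k / n + (-k : ℤ) * (2 * π * I) := by
      push_cast; field_simp; ring
    simp only [F, harg, hphase, hper _, exp_add, exp_int_mul_two_pi_mul_I, mul_one]
  have hterm (m : ℕ) : s (2 * π * ((m : ℝ) - 1) / n - 2 * π * j / n) *
      exp (-2 * π * I * (m : ℂ) * (k : ℂ) / (n : ℂ)) =
      exp (-I * k * (2 * π * j / n : ℝ)) * F (m - j) := by
    have harg : 2 * π * ((m : ℝ) - 1) / n - 2 * π * j / n =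
        2 * π * (((m - j : ℤ) : ℝ) - 1) / n := by
      push_cast; ring
    have hphase : -2 * π * I * (m : ℂ) * (k : ℂ) / (n : ℂ) =
        -I * k * (2 * π * j / n : ℝ) + -2 * π * I * ((m - j : ℤ) : ℂ) * k / n := by
      push_cast; ring
    rw [harg, hphase, exp_add]
    ring
  simp only [shiftedDFT, hterm, ← mul_sum, hF.sum_Icc_sub, sub_zero]
  simp only [F, Int.cast_natCast]
  ring

theorem norm_shiftedDFT_sub_le {n : ℕ} (hn : n ≠ 0) {s : ℝ → ℂ} {L : ℝ}
    (hs : ∀ a b, ‖s a - s b‖ ≤ L * |a - b|) (k : ℤ) (θ θ' : ℝ) :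
    ‖shiftedDFT n s k θ - shiftedDFT n s k θ'‖ ≤ L * |θ - θ'| := by
  have hterm (m : ℕ) :
      ‖(s (2 * π * ((m : ℝ) - 1) / n - θ) - s (2 * π * ((m : ℝ) - 1) / n - θ')) *
        exp (-2 * π * I * (m : ℂ) * (k : ℂ) / (n : ℂ))‖ ≤ L * |θ - θ'| := by
    have hphase : -2 * π * I * (m : ℂ) * (k : ℂ) / (n : ℂ) = (-2 * π * m * k / n : ℝ) * I := by
      push_cast; ring
    rw [norm_mul, hphase, norm_exp_ofReal_mul_I, mul_one]
    refine (hs _ _).trans_eq ?_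
    rw [sub_sub_sub_cancel_left, abs_sub_comm]
  have hsum := norm_sum_le_of_le (Icc 1 n) fun m _ ↦ hterm m
  rw [sum_const, Nat.card_Icc, Nat.add_sub_cancel, nsmul_eq_mul] at hsum
  rw [shiftedDFT, shiftedDFT, ← mul_sub, ← sum_sub_distrib, norm_mul]
  simp only [← sub_mul]
  calc ‖(1 / n : ℂ)‖ * _ ≤ 1 / n * (n * (L * |θ - θ'|)) := by
        rw [norm_div, norm_one, Complex.norm_natCast]; gcongr
    _ = L * |θ - θ'| := by field_simp

theorem norm_exp_ofReal_mul_I_sub_le (x y : ℝ) : ‖exp (x * I) - exp (y * I)‖ ≤ |x - y| := by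
  simpa [circleMap, dist_eq, Real.dist_eq] using (lipschitzWith_circleMap 0 1).dist_le_mul x y

theorem norm_exp_neg_I_mul_sub_le (k : ℤ) (θ θ' : ℝ) :
    ‖exp (-I * k * θ) - exp (-I * k * θ')‖ ≤ |(k : ℝ)| * |θ - θ'| := by
  have h := norm_exp_ofReal_mul_I_sub_le (-k * θ) (-k * θ')
  push_cast at h
  rw [← mul_sub_left_distrib, abs_mul, abs_neg] at h
  simpa only [mul_comm _ I, neg_mul, mul_neg, mul_assoc] using h

theorem dft_discretization_error_bound
    (n : ℕ) (hn : 1 ≤ n) (s : ℝ → ℂ) (hper : ∀ t, s (t + 2 * Real.pi) = s t)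
    (L : ℝ) (hs : ∀ a b, ‖s a - s b‖ ≤ L * |a - b|)
    (k : ℤ) (θ : ℝ) (j : ℤ) (hθ : |θ - 2 * Real.pi * (j : ℝ) / n| ≤ Real.pi / n)
    (cs : ℂ)
    (hcs : cs = (1 / n : ℂ) * ∑ m ∈ Finset.Icc 1 n,
      s (2 * Real.pi * ((m : ℝ) - 1) / n) *
        Complex.exp (-2 * Real.pi * Complex.I * (m : ℂ) * (k : ℂ) / (n : ℂ))) :
    ‖
        ((1 / n : ℂ) * ∑ m ∈ Finset.Icc 1 n,
            s (2 * Real.pi * ((m : ℝ) - 1) / n - θ) *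
              Complex.exp (-2 * Real.pi * Complex.I * (m : ℂ) * (k : ℂ) / (n : ℂ)) -
          Complex.exp (-Complex.I * (k : ℂ) * (θ : ℂ)) * cs)‖ ≤
      (L + |(k : ℝ)| * ‖cs‖) * (Real.pi / n) := by
  have hn0 : n ≠ 0 := by omega
  have hL : 0 ≤ L := (norm_nonneg _).trans (by simpa using hs 0 1)
  have hcs0 : cs = shiftedDFT n s k 0 := by simp only [hcs, shiftedDFT, sub_zero]
  set θj : ℝ := 2 * π * j / n
  have hgrid : shiftedDFT n s k θj = exp (-I * k * θj) * cs := by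
    rw [hcs0]; exact shiftedDFT_grid hn0 hper k j
  change ‖shiftedDFT n s k θ - exp (-I * k * θ) * cs‖ ≤ _
  calc ‖shiftedDFT n s k θ - exp (-I * k * θ) * cs‖
      = ‖(shiftedDFT n s k θ - shiftedDFT n s k θj) +
          (exp (-I * k * θj) - exp (-I * k * θ)) * cs‖ := by
        rw [hgrid]; congr 1; ring
    _ ≤ L * |θ - θj| + |(k : ℝ)| * |θj - θ| * ‖cs‖ := by
        refine (norm_add_le _ _).trans (add_le_add (norm_shiftedDFT_sub_le hn0 hs k θ θj) ?_)
        rw [norm_mul]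
        gcongr
        exact norm_exp_neg_I_mul_sub_le k θj θ
    _ ≤ L * (π / n) + |(k : ℝ)| * (π / n) * ‖cs‖ := by
        rw [abs_sub_comm θj]; gcongr
    _ = (L + |(k : ℝ)| * ‖cs‖) * (π / n) := by ring
end

section
/- Let K ∈ ℕ, let λ₀, …, λ_K be nonnegative reals with W := Σ_{m=0}^K λ_m > 0, let k be a nonzero real number, let θ₀, …, θ_K and α₀, …, α_K be real numbers, and let η ∈ (0, 1). Suppose c′ ∈ ℝ is such that Re( e^{−ikc′} · (1/W) Σ_{m=0}^K λ_m e^{ik(θ_m − α_m)} ) ≥ 1 − η and |k·(θ_m − α_m − c′)| ≤ π for every m. Then Σ_{m=0}^K λ_m (θ_m − α_m − c′)² ≤ (π²/2) · W · η / k². -/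
/-!
Rotating by `e^{-ikc'}` turns the real part of the phase average into the weighted mean of
`cos (k (θ_m - α_m - c'))`, so the hypothesis says `∑ λ_m (1 - cos (k x_m)) ≤ W η` with
`x_m = θ_m - α_m - c'`. Since every `k x_m` lies in `[-π, π]`, Jordan's inequality
`1 - cos t ≥ (2 / π²) t²` bounds `(2 k² / π²) ∑ λ_m x_m²` by the same quantity.
-/

open Complex Finset

lemma re_exp_neg_mul_sum_ofReal_mul_exp {ι : Type*} (s : Finset ι) (w φ : ι → ℝ) (c : ℝ) :
    (exp (-I * c) * ∑ i ∈ s, (w i : ℂ) * exp (I * φ i)).re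
      = ∑ i ∈ s, w i * Real.cos (φ i - c) := by
  rw [mul_sum, re_sum]
  refine sum_congr rfl fun i _ => ?_
  have hrot : exp (-I * c) * ((w i : ℂ) * exp (I * φ i)) = w i * exp ((φ i - c : ℝ) * I) := by
    rw [mul_left_comm, ← exp_add]
    push_cast
    ring_nf
  rw [hrot, re_ofReal_mul, exp_ofReal_mul_I_re]

lemma two_div_pi_sq_mul_sum_sq_le_sum_one_sub_cos {ι : Type*} (s : Finset ι) (w x : ι → ℝ)
    (hw : ∀ i ∈ s, 0 ≤ w i) (hx : ∀ i ∈ s, |x i| ≤ Real.pi) :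
    2 / Real.pi ^ 2 * ∑ i ∈ s, w i * x i ^ 2 ≤ ∑ i ∈ s, w i * (1 - Real.cos (x i)) := by
  rw [mul_sum]
  refine sum_le_sum fun i hi => ?_
  have := Real.cos_le_one_sub_mul_cos_sq (hx i hi)
  nlinarith [hw i hi]

theorem sqErr_original_variables_general
    (K : ℕ) (lam : Fin (K + 1) → ℝ) (hlam : ∀ m, 0 ≤ lam m)
    (W : ℝ) (hW : W = ∑ m, lam m) (hWpos : 0 < W)
    (k : ℝ) (hk : k ≠ 0)
    (θ α : Fin (K + 1) → ℝ) (c' : ℝ) (η : ℝ)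
    (h1 : 1 - η ≤
      (Complex.exp (-Complex.I * ((k * c' : ℝ) : ℂ)) *
        ((1 / W : ℝ) *
          ∑ m, (lam m : ℂ) * Complex.exp (Complex.I * ((k * (θ m - α m) : ℝ) : ℂ)))).re)
    (h2 : ∀ m, |k * (θ m - α m - c')| ≤ Real.pi) :
    ∑ m, lam m * (θ m - α m - c') ^ 2 ≤ (Real.pi ^ 2 / 2) * W * η / k ^ 2 := by
  set x : Fin (K + 1) → ℝ := fun m => θ m - α m - c'
  have hcos : W * (1 - η) ≤ ∑ m, lam m * Real.cos (k * x m) := by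
    rw [mul_left_comm, re_ofReal_mul, re_exp_neg_mul_sum_ofReal_mul_exp] at h1
    have hphase : ∀ m, k * (θ m - α m) - k * c' = k * x m := fun m => by ring
    simp only [hphase] at h1
    rwa [one_div_mul_eq_div, le_div_iff₀' hWpos] at h1
  have hdefect : ∑ m, lam m * (1 - Real.cos (k * x m)) ≤ W * η := by
    simp only [mul_one_sub, sum_sub_distrib, ← hW]
    linarith
  have hjordan := two_div_pi_sq_mul_sum_sq_le_sum_one_sub_cos univ lam (fun m => k * x m)
    (fun m _ => hlam m) (fun m _ => h2 m)
  have hscale : ∑ m, lam m * (k * x m) ^ 2 = k ^ 2 * ∑ m, lam m * x m ^ 2 := by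
    rw [mul_sum]
    exact sum_congr rfl fun m _ => by ring
  rw [hscale] at hjordan
  rw [le_div_iff₀ (by positivity)]
  have hpi := Real.pi_pos
  calc (∑ m, lam m * x m ^ 2) * k ^ 2
      = Real.pi ^ 2 / 2 * (2 / Real.pi ^ 2 * (k ^ 2 * ∑ m, lam m * x m ^ 2)) := by
        field_simp
    _ ≤ Real.pi ^ 2 / 2 * W * η := by
        rw [mul_assoc _ W]
        exact mul_le_mul_of_nonneg_left (hjordan.trans hdefect) (by positivity)

theorem sqErr_original_variables
    (K : ℕ) (lam : Fin (K + 1) → ℝ) (hlam : ∀ m, 0 ≤ lam m)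
    (W : ℝ) (hW : W = ∑ m, lam m) (hWpos : 0 < W)
    (k : ℝ) (hk : k ≠ 0)
    (θ α : Fin (K + 1) → ℝ) (c' : ℝ) (η : ℝ) (hη : η ∈ Set.Ioo (0 : ℝ) 1)
    (h1 : 1 - η ≤
      (Complex.exp (-Complex.I * ((k * c' : ℝ) : ℂ)) *
        ((1 / W : ℝ) *
          ∑ m, (lam m : ℂ) * Complex.exp (Complex.I * ((k * (θ m - α m) : ℝ) : ℂ)))).re)
    (h2 : ∀ m, |k * (θ m - α m - c')| ≤ Real.pi) :
    ∑ m, lam m * (θ m - α m - c') ^ 2 ≤ (Real.pi ^ 2 / 2) * W * η / k ^ 2 :=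
  sqErr_original_variables_general K lam hlam W hW hWpos k hk θ α c' η h1 h2
end
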